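/- arXiv:2405.20250 — 2 statements merged into one kernel-verified Lean document; each statement's English description precedes it below -/
import Mathlib

section
/- Let A be a measurable space, μ a probability measure on A, and Z, Z' : A → ℝ bounded measurable functions. Then | KL(π(Z)|μ) - KL(π(Z')|μ) | ≤ 2·( 2·‖Z‖_∞ + 1 )·‖Z - Z'‖_∞. -/
open MeasureTheory

/-! Bounded perturbations of the potential move the Gibbs measure `π(f) = μ.tilted f` only a little:
if `|f - g| ≤ ε`, the partition functions differ by a factor at most `exp ε` and the densities by a
factor at most `exp (2ε)`, so the densities are `4ε`-close in `L¹(μ)`. Writing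
`KL(π(f)|μ) = ∫ f dπ(f) - log ∫ exp f dμ`, the difference of the divergences splits into
`∫ f d(π(f) - π(g))`, `∫ (f - g) dπ(g)` and the difference of the log-partition functions, which
are bounded by `4 ‖f‖_∞ ε`, `ε` and `ε`. -/

/-- The Gibbs measure associated with a measurable function `Z : A → ℝ` and reference
probability measure `μ`: the measure absolutely continuous with respect to `μ` with density
`a ↦ exp (Z a) / ∫ exp (Z a') μ(da')`. -/
noncomputable def gibbs {A : Type*} [MeasurableSpace A] (μ : Measure A) (Z : A → ℝ) :
    Measure A :=
  μ.withDensity fun a => ENNReal.ofReal (Real.exp (Z a) / ∫ a', Real.exp (Z a') ∂μ)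

/-- The (real-valued) Kullback–Leibler divergence `KL(ν|μ) = ∫ ln (dν/dμ) dν`, expressed via
the Radon–Nikodym derivative; for the Gibbs measures considered here `ν ≪ μ` and the
integral is finite. -/
noncomputable def KLreal {A : Type*} [MeasurableSpace A] (ν μ : Measure A) : ℝ :=
  ∫ a, Real.log (ν.rnDeriv μ a).toReal ∂ν

open Real

noncomputable def gibbsDensity {A : Type*} [MeasurableSpace A] (μ : Measure A) (f : A → ℝ)
    (a : A) : ℝ :=
  exp (f a) / ∫ a', exp (f a') ∂μ

lemma abs_le_iSup_abs {ι : Type*} {f : ι → ℝ} {C : ℝ} (hC : ∀ i, |f i| ≤ C) (i : ι) :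
    |f i| ≤ ⨆ j, |f j| :=
  le_ciSup ⟨C, Set.forall_mem_range.2 hC⟩ i

section

variable {A : Type*} [MeasurableSpace A] {μ : Measure A}

lemma integral_abs_sub_le_of_le_exp_mul {p q : A → ℝ} {δ : ℝ}
    (hp : Integrable p μ) (hq : Integrable q μ) (hp1 : ∫ a, p a ∂μ = 1) (hq1 : ∫ a, q a ∂μ = 1)
    (hp0 : ∀ a, 0 ≤ p a) (hq0 : ∀ a, 0 ≤ q a) (hδ : 0 ≤ δ)
    (hpq : ∀ a, p a ≤ exp δ * q a) (hqp : ∀ a, q a ≤ exp δ * p a) :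
    ∫ a, |p a - q a| ∂μ ≤ 2 * δ := by
  rcases le_or_gt δ 1 with hδ1 | hδ1
  · have hpt : ∀ a, |p a - q a| ≤ (exp δ - 1) * q a := fun a => by
      rw [abs_sub_le_iff]
      constructor
      · linarith [hpq a]
      -- `exp δ * (p - (2 - exp δ) q) ≥ (exp δ - 1)² q` by `hqp`
      · nlinarith [hqp a, mul_nonneg (hq0 a) (sq_nonneg (exp δ - 1)), exp_pos δ]
    have hexp : exp δ - 1 ≤ 2 * δ := by
      have := (abs_le.1 (abs_exp_sub_one_le (x := δ) (by rwa [abs_of_nonneg hδ]))).2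
      rwa [abs_of_nonneg hδ] at this
    calc ∫ a, |p a - q a| ∂μ ≤ ∫ a, (exp δ - 1) * q a ∂μ :=
          integral_mono (hp.sub hq).abs (hq.const_mul _) hpt
      _ = exp δ - 1 := by rw [integral_const_mul, hq1, mul_one]
      _ ≤ 2 * δ := hexp
  · have hpt : ∀ a, |p a - q a| ≤ p a + q a := fun a => by
      rw [abs_sub_le_iff]
      constructor <;> linarith [hp0 a, hq0 a]
    calc ∫ a, |p a - q a| ∂μ ≤ ∫ a, (p a + q a) ∂μ :=
          integral_mono (hp.sub hq).abs (hp.add hq) hpt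
      _ = 2 := by rw [integral_add hp hq, hp1, hq1]; norm_num
      _ ≤ 2 * δ := by linarith

variable {f g : A → ℝ} {ε : ℝ}

lemma gibbs_eq_tilted (μ : Measure A) (f : A → ℝ) : gibbs μ f = μ.tilted f := rfl

lemma integrable_of_abs_le [IsFiniteMeasure μ] (hf : Measurable f) {C : ℝ}
    (hC : ∀ a, |f a| ≤ C) : Integrable f μ :=
  .of_bound hf.aestronglyMeasurable C (ae_of_all _ hC)

lemma integrable_exp_of_abs_le [IsFiniteMeasure μ] (hf : Measurable f) {C : ℝ}
    (hC : ∀ a, |f a| ≤ C) : Integrable (fun a => exp (f a)) μ :=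
  integrable_of_abs_le hf.exp fun a => by
    rw [abs_exp]; exact exp_le_exp.2 (abs_le.1 (hC a)).2

lemma integral_exp_le_exp_mul_integral_exp (hf : Integrable (fun a => exp (f a)) μ)
    (hg : Integrable (fun a => exp (g a)) μ) (hfg : ∀ a, f a ≤ g a + ε) :
    ∫ a, exp (f a) ∂μ ≤ exp ε * ∫ a, exp (g a) ∂μ :=
  calc ∫ a, exp (f a) ∂μ ≤ ∫ a, exp ε * exp (g a) ∂μ :=
        integral_mono hf (hg.const_mul _) fun a => by
          rw [← exp_add]; exact exp_le_exp.2 (by linarith [hfg a])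
    _ = exp ε * ∫ a, exp (g a) ∂μ := integral_const_mul _ _

lemma abs_log_integral_exp_sub_le [NeZero μ] (hf : Integrable (fun a => exp (f a)) μ)
    (hg : Integrable (fun a => exp (g a)) μ) (hfg : ∀ a, |f a - g a| ≤ ε) :
    |log (∫ a, exp (f a) ∂μ) - log (∫ a, exp (g a) ∂μ)| ≤ ε := by
  have hlog_le {f g : A → ℝ} (hf : Integrable (fun a => exp (f a)) μ)
      (hg : Integrable (fun a => exp (g a)) μ) (hfg : ∀ a, f a ≤ g a + ε) :
      log (∫ a, exp (f a) ∂μ) ≤ ε + log (∫ a, exp (g a) ∂μ) := by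
    rw [← log_exp ε, ← log_mul (exp_ne_zero ε) (integral_exp_pos hg).ne']
    exact log_le_log (integral_exp_pos hf) (integral_exp_le_exp_mul_integral_exp hf hg hfg)
  rw [abs_sub_le_iff]
  constructor
  · linarith [hlog_le hf hg fun a => by linarith [(abs_le.1 (hfg a)).2]]
  · linarith [hlog_le hg hf fun a => by linarith [(abs_le.1 (hfg a)).1]]

lemma gibbsDensity_nonneg (μ : Measure A) (f : A → ℝ) (a : A) : 0 ≤ gibbsDensity μ f a :=
  div_nonneg (exp_pos _).le (integral_nonneg fun _ => (exp_pos _).le)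

lemma integrable_gibbsDensity (hf : Integrable (fun a => exp (f a)) μ) :
    Integrable (gibbsDensity μ f) μ :=
  hf.div_const _

lemma integral_gibbsDensity [NeZero μ] (hf : Integrable (fun a => exp (f a)) μ) :
    ∫ a, gibbsDensity μ f a ∂μ = 1 := by
  unfold gibbsDensity
  rw [integral_div, div_self (integral_exp_pos hf).ne']

lemma gibbsDensity_le_exp_mul [NeZero μ] (hf : Integrable (fun a => exp (f a)) μ)
    (hg : Integrable (fun a => exp (g a)) μ) (hfg : ∀ a, |f a - g a| ≤ ε) (a : A) :
    gibbsDensity μ f a ≤ exp (2 * ε) * gibbsDensity μ g a := by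
  have hnum : exp (f a) ≤ exp ε * exp (g a) := by
    rw [← exp_add]; exact exp_le_exp.2 (by linarith [(abs_le.1 (hfg a)).2])
  have hden : ∫ a, exp (g a) ∂μ ≤ exp ε * ∫ a, exp (f a) ∂μ :=
    integral_exp_le_exp_mul_integral_exp hg hf fun a => by linarith [(abs_le.1 (hfg a)).1]
  unfold gibbsDensity
  rw [mul_div_assoc', div_le_div_iff₀ (integral_exp_pos hf) (integral_exp_pos hg), two_mul,
    exp_add]
  calc exp (f a) * ∫ a, exp (g a) ∂μ
      ≤ (exp ε * exp (g a)) * (exp ε * ∫ a, exp (f a) ∂μ) :=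
        mul_le_mul hnum hden (integral_exp_pos hg).le (by positivity)
    _ = exp ε * exp ε * exp (g a) * ∫ a, exp (f a) ∂μ := by ring

lemma integral_abs_gibbsDensity_sub_le [NeZero μ] (hf : Integrable (fun a => exp (f a)) μ)
    (hg : Integrable (fun a => exp (g a)) μ) (hfg : ∀ a, |f a - g a| ≤ ε) (hε : 0 ≤ ε) :
    ∫ a, |gibbsDensity μ f a - gibbsDensity μ g a| ∂μ ≤ 4 * ε := by
  have hgf : ∀ a, |g a - f a| ≤ ε := fun a => abs_sub_comm (f a) (g a) ▸ hfg a
  linarith [integral_abs_sub_le_of_le_exp_mul (integrable_gibbsDensity hf)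
    (integrable_gibbsDensity hg) (integral_gibbsDensity hf) (integral_gibbsDensity hg)
    (gibbsDensity_nonneg μ f) (gibbsDensity_nonneg μ g) (by linarith : 0 ≤ 2 * ε)
    (gibbsDensity_le_exp_mul hf hg hfg) (gibbsDensity_le_exp_mul hg hf hgf)]

lemma integral_tilted_eq_integral_gibbsDensity_mul (f h : A → ℝ) :
    ∫ a, h a ∂μ.tilted f = ∫ a, gibbsDensity μ f a * h a ∂μ :=
  integral_tilted f h

lemma abs_integral_tilted_sub_le {h : A → ℝ} {M : ℝ} (hf : Integrable (fun a => exp (f a)) μ)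
    (hg : Integrable (fun a => exp (g a)) μ) (hh : AEStronglyMeasurable h μ)
    (hM : ∀ a, |h a| ≤ M) :
    |∫ a, h a ∂μ.tilted f - ∫ a, h a ∂μ.tilted g|
      ≤ M * ∫ a, |gibbsDensity μ f a - gibbsDensity μ g a| ∂μ := by
  have hbdd : ∀ᵐ a ∂μ, ‖h a‖ ≤ M := ae_of_all _ hM
  rw [integral_tilted_eq_integral_gibbsDensity_mul, integral_tilted_eq_integral_gibbsDensity_mul,
    ← integral_sub ((integrable_gibbsDensity hf).mul_bdd hh hbdd)
      ((integrable_gibbsDensity hg).mul_bdd hh hbdd), ← integral_const_mul]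
  refine (Real.norm_eq_abs _).symm.trans_le (norm_integral_le_of_norm_le
    (((integrable_gibbsDensity hf).sub (integrable_gibbsDensity hg)).abs.const_mul M)
    (ae_of_all _ fun a => ?_))
  simp only [Real.norm_eq_abs, ← sub_mul, abs_mul]
  rw [mul_comm M]
  exact mul_le_mul_of_nonneg_left (hM a) (abs_nonneg _)

lemma KLreal_tilted_self [SigmaFinite μ] [NeZero μ] (hf : Integrable (fun a => exp (f a)) μ)
    (hfπ : Integrable f (μ.tilted f)) :
    KLreal (μ.tilted f) μ = ∫ a, f a ∂μ.tilted f - log (∫ a, exp (f a) ∂μ) := by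
  have := isProbabilityMeasure_tilted hf
  have hlog : (fun a => log ((μ.tilted f).rnDeriv μ a).toReal)
      =ᵐ[μ.tilted f] fun a => f a - log (∫ a, exp (f a) ∂μ) :=
    (tilted_absolutelyContinuous μ f).ae_eq (log_rnDeriv_tilted_left_self hf)
  rw [KLreal, integral_congr_ae hlog, integral_sub hfπ (integrable_const _), integral_const,
    probReal_univ, one_smul]

end

/-- For a probability measure `μ` and bounded measurable `Z, Z' : A → ℝ`,
`|KL(π(Z)|μ) - KL(π(Z')|μ)| ≤ 2·(2·‖Z‖_∞ + 1)·‖Z - Z'‖_∞`, where `π(·)` denotes the Gibbs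
measure with respect to `μ` and `‖·‖_∞` the supremum norm. -/
theorem kl_gibbs_locally_lipschitz
    {A : Type*} [MeasurableSpace A] (μ : Measure A) [IsProbabilityMeasure μ]
    (Z Z' : A → ℝ) (hZmeas : Measurable Z) (hZ'meas : Measurable Z')
    (hZb : ∃ C, ∀ a, |Z a| ≤ C) (hZ'b : ∃ C, ∀ a, |Z' a| ≤ C) :
    |KLreal (gibbs μ Z) μ - KLreal (gibbs μ Z') μ|
      ≤ 2 * (2 * (⨆ a, |Z a|) + 1) * ⨆ a, |Z a - Z' a| := by
  obtain ⟨C, hC⟩ := hZb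
  obtain ⟨C', hC'⟩ := hZ'b
  set M := ⨆ a, |Z a|
  set ε := ⨆ a, |Z a - Z' a|
  have hM : ∀ a, |Z a| ≤ M := abs_le_iSup_abs hC
  have hM0 : 0 ≤ M := Real.iSup_nonneg fun _ => abs_nonneg _
  have hε : ∀ a, |Z a - Z' a| ≤ ε :=
    abs_le_iSup_abs fun a => (abs_sub _ _).trans (add_le_add (hC a) (hC' a))
  have hε0 : 0 ≤ ε := Real.iSup_nonneg fun _ => abs_nonneg _
  have hZexp := integrable_exp_of_abs_le (μ := μ) hZmeas hC
  have hZ'exp := integrable_exp_of_abs_le (μ := μ) hZ'meas hC'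
  have := isProbabilityMeasure_tilted hZ'exp
  have hmean : |∫ a, Z a ∂μ.tilted Z - ∫ a, Z a ∂μ.tilted Z'| ≤ M * (4 * ε) :=
    (abs_integral_tilted_sub_le hZexp hZ'exp hZmeas.aestronglyMeasurable hM).trans
      (mul_le_mul_of_nonneg_left (integral_abs_gibbsDensity_sub_le hZexp hZ'exp hε hε0) hM0)
  have hpert : |∫ a, Z a ∂μ.tilted Z' - ∫ a, Z' a ∂μ.tilted Z'| ≤ ε := by
    rw [← integral_sub (integrable_of_abs_le hZmeas hC) (integrable_of_abs_le hZ'meas hC')]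
    simpa using norm_integral_le_of_norm_le_const (μ := μ.tilted Z')
      (f := fun a => Z a - Z' a) (ae_of_all _ hε)
  have hlog := abs_log_integral_exp_sub_le hZexp hZ'exp hε
  rw [gibbs_eq_tilted, gibbs_eq_tilted, KLreal_tilted_self hZexp (integrable_of_abs_le hZmeas hC),
    KLreal_tilted_self hZ'exp (integrable_of_abs_le hZ'meas hC')]
  rw [abs_le] at hmean hpert hlog ⊢
  constructor <;> linarith [hmean.1, hmean.2, hpert.1, hpert.2, hlog.1, hlog.2]
end

section
/- Let α < β be real numbers, A = [α, β], and let μ be the uniform probability measure on [α, β]. For τ > 0 define 𝔥_τ(p) = -τ·ln( ∫_A exp( -( p·a + a²/2 )/τ ) μ(da) ) and define 𝔥(p) = min_{a∈[α,β]} ( p·a + a²/2 ). Then for every M > 0 there exist τ₀ > 0 and C ≥ 0 such that for all p ∈ [-M, M] and all τ ∈ (0, τ₀], 0 ≤ 𝔥_τ(p) - 𝔥(p) ≤ C·τ·ln(1/τ). -/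
/-!
Let `f a = p a + a²/2` and let `x` be its minimiser on `[α, β]`. Since `f ≥ f x` on `[α, β]`, the
`μ`-average of `exp (-f/τ)` is at most `exp (-f x/τ)`, which gives `𝔥 ≤ 𝔥_τ`. Conversely `f` is
Lipschitz on `[α, β]` with a constant `L` uniform in `p ∈ [-M, M]`, so on an interval of length `τ`
inside `[α, β]` containing `x` we have `f ≤ f x + L τ`. That interval has `μ`-mass `τ / (β - α)`,
hence `𝔥_τ ≤ f x + L τ + τ log (β - α) + τ log (1/τ)`, and every error term is `O (τ log (1/τ))`.
-/

open MeasureTheory ProbabilityTheory Real Set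

section LaplaceBounds

variable {X : Type*} [MeasurableSpace X] {μ : Measure X} {f : X → ℝ} {τ : ℝ}

theorem le_neg_mul_log_integral_exp_div [IsProbabilityMeasure μ] {m : ℝ} (hτ : 0 < τ)
    (hm : ∀ᵐ a ∂μ, m ≤ f a) (hint : Integrable (fun a => exp (-f a / τ)) μ) :
    m ≤ -τ * log (∫ a, exp (-f a / τ) ∂μ) := by
  have hle : ∫ a, exp (-f a / τ) ∂μ ≤ exp (-m / τ) :=
    calc ∫ a, exp (-f a / τ) ∂μ ≤ ∫ _, exp (-m / τ) ∂μ :=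
          integral_mono_of_nonneg (ae_of_all _ fun _ => (exp_pos _).le) (integrable_const _)
            (hm.mono fun a ha => exp_le_exp.2 (div_le_div_of_nonneg_right (neg_le_neg ha) hτ.le))
      _ = exp (-m / τ) := by simp
  have hlog := log_le_log (integral_exp_pos hint) hle
  rw [log_exp, le_div_iff₀ hτ] at hlog
  linarith

theorem neg_mul_log_integral_exp_div_le {J : Set X} {c : ℝ} (hτ : 0 < τ)
    (hJ : MeasurableSet J) (hμJ : 0 < μ.real J) (hf : ∀ a ∈ J, f a ≤ c)
    (hint : Integrable (fun a => exp (-f a / τ)) μ) :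
    -τ * log (∫ a, exp (-f a / τ) ∂μ) ≤ c - τ * log (μ.real J) := by
  have hmass : μ.real J * exp (-c / τ) ≤ ∫ a, exp (-f a / τ) ∂μ :=
    calc μ.real J * exp (-c / τ) ≤ ∫ a in J, exp (-f a / τ) ∂μ := by
          rw [mul_comm]
          exact setIntegral_ge_of_const_le_real hJ (ENNReal.toReal_pos_iff.1 hμJ).2.ne
            (fun a ha => exp_le_exp.2 (div_le_div_of_nonneg_right (neg_le_neg (hf a ha)) hτ.le))
            hint.integrableOn
      _ ≤ ∫ a, exp (-f a / τ) ∂μ :=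
          setIntegral_le_integral hint (ae_of_all _ fun _ => (exp_pos _).le)
  have hlog := log_le_log (by positivity) hmass
  rw [log_mul hμJ.ne' (exp_pos _).ne', log_exp] at hlog
  have hc : τ * (-c / τ) = -c := by field_simp
  nlinarith [mul_le_mul_of_nonneg_left hlog hτ.le]

end LaplaceBounds

section UniformIcc

variable {α β : ℝ}

theorem isProbabilityMeasure_cond_Icc (hαβ : α < β) :
    IsProbabilityMeasure (volume[|Icc α β]) :=
  cond_isProbabilityMeasure_of_finite (by simp [hαβ]) (by simp)

theorem ContinuousOn.integrable_cond_Icc {g : ℝ → ℝ} (hαβ : α < β)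
    (hg : ContinuousOn g (Icc α β)) : Integrable g (volume[|Icc α β]) :=
  hg.integrableOn_Icc.smul_measure (by simp [hαβ])

theorem cond_Icc_real_Icc (hαβ : α < β) {s t : ℝ} (hst : s ≤ t) (h : Icc s t ⊆ Icc α β) :
    (volume[|Icc α β]).real (Icc s t) = (t - s) / (β - α) := by
  rw [measureReal_def, cond_apply measurableSet_Icc, inter_eq_right.2 h, Real.volume_Icc,
    Real.volume_Icc, ENNReal.toReal_mul, ENNReal.toReal_inv, ENNReal.toReal_ofReal (by linarith),
    ENNReal.toReal_ofReal (by linarith), div_eq_inv_mul]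

theorem exists_Icc_subset_Icc_mem {x τ : ℝ} (hx : x ∈ Icc α β) (hτ : 0 ≤ τ) (hτβ : τ ≤ β - α) :
    ∃ s, Icc s (s + τ) ⊆ Icc α β ∧ x ∈ Icc s (s + τ) := by
  refine ⟨min x (β - τ), Icc_subset_Icc (le_min hx.1 (by linarith)) ?_, min_le_left _ _, ?_⟩ <;>
    rcases min_cases x (β - τ) with h | h <;> linarith [hx.2]

theorem neg_mul_log_integral_exp_div_cond_Icc_le {f : ℝ → ℝ} {x L τ : ℝ} (hαβ : α < β)
    (hx : x ∈ Icc α β) (hL : 0 ≤ L) (hf : ∀ a ∈ Icc α β, f a ≤ f x + L * |a - x|)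
    (hτ : 0 < τ) (hτβ : τ ≤ β - α)
    (hint : Integrable (fun a => exp (-f a / τ)) (volume[|Icc α β])) :
    -τ * log (∫ a, exp (-f a / τ) ∂volume[|Icc α β]) ≤
      f x + L * τ + τ * log (β - α) + τ * log (1 / τ) := by
  obtain ⟨s, hsub, hxJ⟩ := exists_Icc_subset_Icc_mem hx hτ.le hτβ
  have hfJ : ∀ a ∈ Icc s (s + τ), f a ≤ f x + L * τ := fun a ha =>
    (hf a (hsub ha)).trans (by
      gcongr; exact abs_le.2 ⟨by linarith [ha.1, hxJ.2], by linarith [ha.2, hxJ.1]⟩)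
  have hμJ : (volume[|Icc α β]).real (Icc s (s + τ)) = τ / (β - α) := by
    rw [cond_Icc_real_Icc hαβ (by linarith) hsub, add_sub_cancel_left]
  have hupper := neg_mul_log_integral_exp_div_le hτ measurableSet_Icc
    (hμJ ▸ div_pos hτ (by linarith)) hfJ hint
  rw [hμJ, log_div hτ.ne' (by linarith)] at hupper
  rw [one_div, log_inv]
  linarith

end UniformIcc

theorem add_sq_div_two_le_of_mem_Icc {α β p M a x : ℝ} (hp : |p| ≤ M) (ha : a ∈ Icc α β)
    (hx : x ∈ Icc α β) :
    p * a + a ^ 2 / 2 ≤ p * x + x ^ 2 / 2 + (M + max |α| |β|) * |a - x| := by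
  have hax : |a + x| ≤ 2 * max |α| |β| := by
    linarith [abs_add_le a x, abs_le_max_abs_abs ha.1 ha.2, abs_le_max_abs_abs hx.1 hx.2]
  have hslope : |p + (a + x) / 2| ≤ M + max |α| |β| := by
    linarith [abs_add_le p ((a + x) / 2), show |(a + x) / 2| = |a + x| / 2 by simp [abs_div]]
  have hdiff := (le_abs_self ((a - x) * (p + (a + x) / 2))).trans
    ((abs_mul _ _).trans_le (mul_le_mul_of_nonneg_left hslope (abs_nonneg _)))
  linarith [show p * a + a ^ 2 / 2 - (p * x + x ^ 2 / 2) = (a - x) * (p + (a + x) / 2) by ring]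

theorem one_le_log_one_div {τ : ℝ} (hτ : 0 < τ) (hτe : τ ≤ exp (-1)) : 1 ≤ log (1 / τ) := by
  rw [le_log_iff_exp_le (by positivity), one_div, le_inv_comm₀ (exp_pos 1) hτ, ← exp_neg]
  exact hτe

/-- Lemma 6.2: uniform Laplace asymptotics for a quadratic Hamiltonian on
an interval. Let `A = [α,β]` with `α < β`, let `μ` be the uniform probability measure on
`[α,β]`, and for `τ > 0` set
`𝔥_τ(p) = -τ·ln ∫_A exp(-(p·a + a²/2)/τ) μ(da)` and
`𝔥(p) = min_{a∈[α,β]} (p·a + a²/2)`. Then for every `M > 0` there exist `τ₀ > 0` and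
`C ≥ 0` such that `0 ≤ 𝔥_τ(p) - 𝔥(p) ≤ C·τ·ln(1/τ)` for all `p ∈ [-M,M]` and
`τ ∈ (0,τ₀]`. -/
theorem laplace_asymptotics_quadratic_interval
    (α β : ℝ) (hαβ : α < β)
    (μ : Measure ℝ) (hμ : μ = (volume (Set.Icc α β))⁻¹ • volume.restrict (Set.Icc α β))
    (𝔥τ : ℝ → ℝ → ℝ)
    (h𝔥τ : ∀ τ p, 𝔥τ τ p = -τ * Real.log (∫ a, Real.exp (-(p * a + a ^ 2 / 2) / τ) ∂μ))
    (𝔥 : ℝ → ℝ)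
    (h𝔥 : ∀ p, 𝔥 p = sInf ((fun a => p * a + a ^ 2 / 2) '' Set.Icc α β)) :
    ∀ M > (0 : ℝ), ∃ τ₀ > (0 : ℝ), ∃ C ≥ (0 : ℝ),
      ∀ p ∈ Set.Icc (-M) M, ∀ τ : ℝ, 0 < τ → τ ≤ τ₀ →
        0 ≤ 𝔥τ τ p - 𝔥 p ∧ 𝔥τ τ p - 𝔥 p ≤ C * τ * Real.log (1 / τ) := by
  intro M _
  obtain rfl : μ = volume[|Icc α β] := hμ
  have := isProbabilityMeasure_cond_Icc hαβ
  set L := M + max |α| |β|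
  refine ⟨min (exp (-1)) (β - α), lt_min (exp_pos _) (by linarith), 1 + |log (β - α)| + L,
    by positivity, fun p hp τ hτ hτ₀ => ?_⟩
  set f : ℝ → ℝ := fun a => p * a + a ^ 2 / 2
  obtain ⟨x, hx, hxmin⟩ := isCompact_Icc.exists_isMinOn (nonempty_Icc.2 hαβ.le)
    (by fun_prop : Continuous f).continuousOn
  have h𝔥p : 𝔥 p = f x :=
    (h𝔥 p).trans (IsLeast.csInf_eq ⟨mem_image_of_mem f hx, forall_mem_image.2 hxmin⟩)
  have hint : Integrable (fun a => exp (-f a / τ)) (volume[|Icc α β]) :=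
    ContinuousOn.integrable_cond_Icc hαβ (by fun_prop)
  have hlower := le_neg_mul_log_integral_exp_div hτ
    ((ae_cond_mem measurableSet_Icc).mono fun a ha => hxmin ha) hint
  have hupper := neg_mul_log_integral_exp_div_cond_Icc_le (f := f) (L := L) hαβ hx (by positivity)
    (fun a ha => add_sq_div_two_le_of_mem_Icc (abs_le.2 hp) ha hx) hτ
    (hτ₀.trans (min_le_right _ _)) hint
  have hℓ := one_le_log_one_div hτ (hτ₀.trans (min_le_left _ _))
  rw [h𝔥τ, h𝔥p]
  refine ⟨by linarith, ?_⟩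
  linarith [mul_le_mul_of_nonneg_left hℓ (by positivity : 0 ≤ (|log (β - α)| + L) * τ),
    mul_le_mul_of_nonneg_left (le_abs_self (log (β - α))) hτ.le]
end
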